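/- Let A_p(x,μ) = √(π/2) cos(x)·[erf((μ+iω₀-εd)/√(2ε)) - erf((μ₀+iω₀-εd)/√(2ε))]·e^{(μ+iω₀-εd)²/(2ε)}. Then A_p satisfies the linear CGL equation ε ∂_μ A_p = (μ+iω₀)A_p + √ε cos(x) + ε d ∂_x² A_p with A_p(x,μ₀) = 0. -/

import Mathlib

/-!
Write `u = μ + iω₀ - εd`. The function separates as `A_p(x, μ) = cos x · P(μ)`. Because
`erf' z = (2/√π) e^{-z²}`, differentiating `P` produces the factor `e^{-u²/(2ε)} e^{u²/(2ε)} = 1`,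
which leaves `ε P' = u P + √ε`; and `∂ₓ² cos = -cos` turns the `-εd` part of `u` into the
dispersion term `εd ∂ₓ² A_p`. The derivative of `erf`, defined as an integral along the segment
`[0, z]`, comes from a primitive of the entire function `e^{-w²}`.
-/

/-- The entire complex error function `erf z = (2/√π) ∫₀^z e^{-t²} dt`,
parametrized along the straight segment from `0` to `z`. -/
noncomputable def cerf (z : ℂ) : ℂ :=
  (2 / Real.sqrt Real.pi : ℝ) * z * ∫ t in (0:ℝ)..1, Complex.exp (-(z * t)^2)

open Complex

theorem Differentiable.hasDerivAt_mul_integral_comp_mul {f : ℂ → ℂ} (hf : Differentiable ℂ f)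
    (z : ℂ) : HasDerivAt (fun w : ℂ => w * ∫ t in (0:ℝ)..1, f (w * t)) (f z) z := by
  obtain ⟨g, hg⟩ := hf.isExactOn_univ
  have hprimitive : (fun w : ℂ => w * ∫ t in (0:ℝ)..1, f (w * t)) = fun w => g w - g 0 := by
    funext w
    have hpath (t : ℝ) : HasDerivAt (fun t : ℝ => g (w * t)) (w * f (w * t)) t := by
      have := (hg (w * t) trivial).comp (t : ℂ) ((hasDerivAt_id (t : ℂ)).const_mul w)
      simpa [mul_comm] using this.comp_ofReal
    have hcont : Continuous fun t : ℝ => w * f (w * t) := by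
      have := hf.continuous; fun_prop
    rw [← intervalIntegral.integral_const_mul, intervalIntegral.integral_eq_sub_of_hasDerivAt
      (fun t _ => hpath t) (hcont.intervalIntegrable _ _)]
    simp
  rw [hprimitive]
  exact (hg z trivial).sub_const _

theorem hasDerivAt_cerf (z : ℂ) :
    HasDerivAt cerf ((2 / Real.sqrt Real.pi : ℝ) * exp (-z ^ 2)) z := by
  have hexp : Differentiable ℂ fun w : ℂ => exp (-w ^ 2) := by fun_prop
  have := (hexp.hasDerivAt_mul_integral_comp_mul z).const_mul ((2 / Real.sqrt Real.pi : ℝ) : ℂ)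
  unfold cerf
  simpa only [← mul_assoc] using this

theorem Real.sqrt_pi_div_two_mul_two_div_sqrt_pi :
    √(Real.pi / 2) * (2 / √Real.pi) = √2 := by
  rw [Real.sqrt_div Real.pi_pos.le, div_mul_div_comm, div_eq_iff (by positivity),
    ← mul_assoc, Real.mul_self_sqrt zero_le_two, mul_comm]

/-- The factor `P` in `A_p(x, μ) = cos x · P(μ)`, with `a = iω₀ - εd` and `w₀ = μ₀`. -/
noncomputable def erfProfile (ε : ℝ) (a w₀ w : ℂ) : ℂ :=
  √(Real.pi / 2) * (cerf ((w + a) / √(2 * ε)) - cerf ((w₀ + a) / √(2 * ε))) *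
    exp ((w + a) ^ 2 / (2 * ε))

theorem erfProfile_self (ε : ℝ) (a w₀ : ℂ) : erfProfile ε a w₀ w₀ = 0 := by
  simp [erfProfile]

theorem hasDerivAt_erfProfile {ε : ℝ} (hε : 0 < ε) (a w₀ w : ℂ) :
    HasDerivAt (erfProfile ε a w₀) (((w + a) * erfProfile ε a w₀ w + √ε) / ε) w := by
  set s : ℂ := ((√(2 * ε) : ℝ) : ℂ)
  have hs_sq : s ^ 2 = 2 * ε := by
    simp only [s, ← ofReal_pow, Real.sq_sqrt (by positivity : (0:ℝ) ≤ 2 * ε)]; push_cast; ring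
  have hshift : HasDerivAt (fun w : ℂ => w + a) 1 w := (hasDerivAt_id w).add_const a
  have herf := (hasDerivAt_cerf ((w + a) / s)).comp w (hshift.div_const s)
  have hgauss := ((hshift.pow 2).div_const (2 * (ε : ℂ))).cexp
  have hraw := ((herf.sub_const (cerf ((w₀ + a) / s))).const_mul (√(Real.pi / 2) : ℂ)).mul hgauss
  have hgauss_inv : exp (-((w + a) / s) ^ 2) * exp ((w + a) ^ 2 / (2 * ε)) = 1 := by
    rw [← exp_add, div_pow, hs_sq, neg_add_cancel, exp_zero]
  have hconst : (√(Real.pi / 2) : ℂ) * ((2 / √Real.pi : ℝ) : ℂ) * (1 / s) = √ε / ε := by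
    have hsqrt : √2 * (1 / √(2 * ε)) = √ε / ε := by
      rw [Real.sqrt_mul zero_le_two, Real.sqrt_div_self']
      field_simp
    simp only [s, ← ofReal_mul, ← ofReal_one, ← ofReal_div,
      Real.sqrt_pi_div_two_mul_two_div_sqrt_pi, hsqrt]
  refine (hraw : HasDerivAt (erfProfile ε a w₀) _ w).congr_deriv ?_
  simp only [Function.comp_apply, Pi.pow_apply, erfProfile]
  linear_combination (√(Real.pi / 2) * ((2 / √Real.pi : ℝ) : ℂ) * (1 / s)) * hgauss_inv + hconst

theorem deriv_deriv_ofReal_cos_mul (c : ℂ) (x : ℝ) :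
    deriv (fun x' => deriv (fun x'' : ℝ => (Real.cos x'' : ℂ) * c) x') x
      = -((Real.cos x : ℂ) * c) := by
  have hcos (x' : ℝ) : HasDerivAt (fun x'' : ℝ => (Real.cos x'' : ℂ) * c)
      (-((Real.sin x' : ℂ) * c)) x' := by
    simpa using ((Real.hasDerivAt_cos x').ofReal_comp).mul_const c
  have hsin : HasDerivAt (fun x' : ℝ => -((Real.sin x' : ℂ) * c)) (-((Real.cos x : ℂ) * c)) x :=
    (((Real.hasDerivAt_sin x).ofReal_comp).mul_const c).neg
  simp only [fun x' => (hcos x').deriv]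
  exact hsin.deriv

theorem stmt_10_general (ε ω₀ μ₀ : ℝ) (hε : 0 < ε) (d : ℂ)
    (Ap : ℝ → ℝ → ℂ)
    (hAp : ∀ x μ : ℝ, Ap x μ =
      (Real.sqrt (Real.pi/2) : ℂ) * (Real.cos x : ℂ) *
        (cerf (((μ:ℂ) + Complex.I*ω₀ - (ε:ℂ)*d)/(Real.sqrt (2*ε) : ℂ))
          - cerf (((μ₀:ℂ) + Complex.I*ω₀ - (ε:ℂ)*d)/(Real.sqrt (2*ε) : ℂ))) *
        Complex.exp (((μ:ℂ) + Complex.I*ω₀ - (ε:ℂ)*d)^2/(2*(ε:ℂ)))) :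
    (∀ x μ : ℝ, (ε:ℂ) * deriv (fun μ' => Ap x μ') μ
      = ((μ:ℂ) + Complex.I*ω₀) * Ap x μ
        + (Real.sqrt ε : ℂ) * (Real.cos x : ℂ)
        + (ε:ℂ) * d * deriv (fun x' => deriv (fun x'' => Ap x'' μ) x') x)
    ∧ ∀ x : ℝ, Ap x μ₀ = 0 := by
  set a : ℂ := I * ω₀ - ε * d
  have hsep : Ap = fun x (μ : ℝ) => (Real.cos x : ℂ) * erfProfile ε a μ₀ μ := by
    funext x μ
    simp only [hAp, erfProfile, a, add_sub_assoc]
    ring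
  subst hsep
  refine ⟨fun x μ => ?_, fun x => by simp only [erfProfile_self, mul_zero]⟩
  have hμ := ((hasDerivAt_erfProfile hε a μ₀ μ).comp_ofReal).const_mul (Real.cos x : ℂ)
  have hε' : (ε : ℂ) ≠ 0 := ofReal_ne_zero.mpr hε.ne'
  rw [hμ.deriv, deriv_deriv_ofReal_cos_mul]
  field_simp
  ring

theorem stmt_10 (ε ω₀ μ₀ : ℝ) (hε : 0 < ε) (hω₀ : 0 < ω₀) (d : ℂ)
    (Ap : ℝ → ℝ → ℂ)
    (hAp : ∀ x μ : ℝ, Ap x μ =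
      (Real.sqrt (Real.pi/2) : ℂ) * (Real.cos x : ℂ) *
        (cerf (((μ:ℂ) + Complex.I*ω₀ - (ε:ℂ)*d)/(Real.sqrt (2*ε) : ℂ))
          - cerf (((μ₀:ℂ) + Complex.I*ω₀ - (ε:ℂ)*d)/(Real.sqrt (2*ε) : ℂ))) *
        Complex.exp (((μ:ℂ) + Complex.I*ω₀ - (ε:ℂ)*d)^2/(2*(ε:ℂ)))) :
    (∀ x μ : ℝ, (ε:ℂ) * deriv (fun μ' => Ap x μ') μ
      = ((μ:ℂ) + Complex.I*ω₀) * Ap x μ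
        + (Real.sqrt ε : ℂ) * (Real.cos x : ℂ)
        + (ε:ℂ) * d * deriv (fun x' => deriv (fun x'' => Ap x'' μ) x') x)
    ∧ ∀ x : ℝ, Ap x μ₀ = 0 :=
  stmt_10_general ε ω₀ μ₀ hε d Ap hAp
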